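/- Let N, A, B, C be integers with σ = A+B+C, ω = AB+AC+BC, π = ABC. Suppose 2^4 divides N, 2² | σ, 2 ∤ A, and 2² | B·C. Then the 2-adic valuation of z := 24·[10·ω·N·n + σ·(A+N·n)·(A+N·(n-1))] + 8·(2σ-N)·[σ·(4σ-N) - 15·ω - 6·σ·(A+N·n)] + 240·A·ω + 504·π equals 4, for every integer n ≥ 0. -/

import Mathlib

/-!
Modulo `2^5`, the terms `24·[…]`, `8·(2σ - N)·[…]` and `504·π` all vanish: the first bracket and
`2σ - N` are divisible by `4` because `2^4 ∣ N` and `2^2 ∣ σ`, and `π = A·(B·C)` is divisible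
by `4`. What remains is `240·A·ω = 2^4·(15·A·ω)`, and `15·A·ω` is odd: `A` is odd and
`ω = A·σ - A² + B·C` with `σ` and `B·C` even.
-/

theorem dvd_and_not_dvd_of_dvd_sub_pow_mul {R : Type*} [CommRing R] [IsDomain R] {p z u : R}
    {k : ℕ} (hp : p ≠ 0) (hu : ¬ p ∣ u) (h : p ^ (k + 1) ∣ z - p ^ k * u) :
    p ^ k ∣ z ∧ ¬ p ^ (k + 1) ∣ z := by
  have hk : p ^ k ∣ z - p ^ k * u := (pow_dvd_pow p k.le_succ).trans h
  refine ⟨by simpa using hk.add (dvd_mul_right (p ^ k) u), fun hz => hu ?_⟩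
  have : p ^ k * p ∣ p ^ k * u := by simpa [← pow_succ] using hz.sub h
  exact (mul_dvd_mul_iff_left (pow_ne_zero k hp)).1 this

theorem odd_mul_add_mul_add_mul {R : Type*} [CommRing R] {a b c : R} (ha : Odd a)
    (habc : Even (a + b + c)) (hbc : Even (b * c)) : Odd (a * b + a * c + b * c) := by
  have : a * b + a * c + b * c = a * (a + b + c) - a * a + b * c := by ring
  rw [this]
  exact ((habc.mul_left a).sub_odd (ha.mul ha)).add_even hbc

theorem two_pow_five_dvd_sub_of_four_dvd {X D Y a w π : ℤ} (hX : 4 ∣ X) (hD : 4 ∣ D)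
    (hπ : 4 ∣ π) :
    (2 : ℤ) ^ 5 ∣ 24 * X + 8 * D * Y + 240 * a * w + 504 * π - 2 ^ 4 * (15 * a * w) := by
  obtain ⟨x, rfl⟩ := hX
  obtain ⟨d, rfl⟩ := hD
  obtain ⟨p, rfl⟩ := hπ
  exact ⟨3 * x + d * Y + 63 * p, by ring⟩

theorem stmt_5 (N A B C : ℤ) (σ ω π : ℤ)
    (hσ : σ = A + B + C) (hω : ω = A * B + A * C + B * C) (hπ : π = A * B * C)
    (hN : (2 : ℤ) ^ 4 ∣ N) (hσ4 : (2 : ℤ) ^ 2 ∣ σ)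
    (hA : ¬ (2 : ℤ) ∣ A) (hBC : (2 : ℤ) ^ 2 ∣ B * C)
    (n : ℕ) :
    (2 : ℤ) ^ 4 ∣ (24 * (10 * ω * N * n + σ * (A + N * n) * (A + N * (n - 1)))
        + 8 * (2 * σ - N) * (σ * (4 * σ - N) - 15 * ω - 6 * σ * (A + N * n))
        + 240 * A * ω + 504 * π) ∧
      ¬ (2 : ℤ) ^ 5 ∣ (24 * (10 * ω * N * n + σ * (A + N * n) * (A + N * (n - 1)))
        + 8 * (2 * σ - N) * (σ * (4 * σ - N) - 15 * ω - 6 * σ * (A + N * n))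
        + 240 * A * ω + 504 * π) := by
  have hN4 : (4 : ℤ) ∣ N := (pow_dvd_pow 2 (by norm_num : 2 ≤ 4)).trans hN
  have hσ4' : (4 : ℤ) ∣ σ := by simpa using hσ4
  have hπ4 : (4 : ℤ) ∣ π := hπ ▸ mul_assoc A B C ▸ (by simpa using hBC.mul_left A)
  have hA_odd : Odd A := Int.not_even_iff_odd.1 (fun h => hA h.two_dvd)
  have hω_odd : Odd ω := hω ▸ odd_mul_add_mul_add_mul hA_odd
    (hσ ▸ (even_iff_two_dvd.2 ((dvd_pow_self 2 two_ne_zero).trans hσ4)))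
    (even_iff_two_dvd.2 ((dvd_pow_self 2 two_ne_zero).trans hBC))
  have hu : ¬ (2 : ℤ) ∣ 15 * A * ω := by
    rw [← even_iff_two_dvd, Int.not_even_iff_odd]
    exact ((by decide : Odd (15 : ℤ)).mul hA_odd).mul hω_odd
  refine dvd_and_not_dvd_of_dvd_sub_pow_mul (k := 4) two_ne_zero hu
    (two_pow_five_dvd_sub_of_four_dvd ?_ ((hσ4'.mul_left 2).sub hN4) hπ4)
  exact ((hN4.mul_left _).mul_right _).add ((hσ4'.mul_right _).mul_right _)
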